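/- Let θ_1,…,θ_n ∈ (0,π/2) with ∑_{i=1}^n θ_i = π. Then for every positive integer α, (∑_{i=1}^n tan θ_i)^{2α} − (n tan(π/n))^α (∑_{i=1}^n tan θ_i)^α ≥ (tan(π/n))^α [(∑_{i=1}^n tan θ_i)^α − (n tan(π/n))^α], with equality if and only if θ_1 = ⋯ = θ_n = π/n. -/

import Mathlib

/-!
By Jensen's inequality for the convex function `tan` on `[0, π/2)`, `S = ∑ tan θᵢ ≥ n tan (π/n)`,
with equality exactly when all `θᵢ = π/n`. With `A = S^α`, `B = (n tan (π/n))^α`, `C = tan (π/n)^α`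
the difference of the two sides is `(A - B)(A - C)`, and `C < B ≤ A`.
-/

open Real Finset

lemma Real.strictConvexOn_tan : StrictConvexOn ℝ (Set.Ico 0 (π / 2)) tan := by
  apply StrictMonoOn.strictConvexOn_of_deriv (convex_Ico _ _)
  · exact continuousOn_tan_Ioo.mono fun x hx => ⟨by linarith [hx.1, pi_pos], hx.2⟩
  · rw [interior_Ico]
    intro x hx y hy hxy
    have hcy : 0 < cos y := cos_pos_of_mem_Ioo ⟨by linarith [hy.1, pi_pos], hy.2⟩
    have hcos : cos y < cos x :=
      strictAntiOn_cos ⟨hx.1.le, by linarith [hx.2, pi_pos]⟩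
        ⟨hy.1.le, by linarith [hy.2, pi_pos]⟩ hxy
    rw [deriv_tan, deriv_tan]
    gcongr

section Mean

variable {ι : Type*} [Fintype ι] {s : Set ℝ} {f : ℝ → ℝ} {p : ι → ℝ}

lemma ConvexOn.card_mul_map_mean_le [Nonempty ι] (hf : ConvexOn ℝ s f) (hp : ∀ i, p i ∈ s) :
    Fintype.card ι * f ((∑ i, p i) / Fintype.card ι) ≤ ∑ i, f (p i) := by
  have hc : (0 : ℝ) < Fintype.card ι := by exact_mod_cast Fintype.card_pos
  have hw : ∑ _i : ι, (Fintype.card ι : ℝ)⁻¹ = 1 := by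
    simp [card_univ, hc.ne']
  have := hf.map_sum_le (t := univ) (fun _ _ => by positivity) hw fun i _ => hp i
  simp only [smul_eq_mul, ← mul_sum] at this
  rw [inv_mul_eq_div, inv_mul_eq_div, le_div_iff₀ hc] at this
  linarith

lemma StrictConvexOn.card_mul_map_mean_eq_iff [Nonempty ι] (hf : StrictConvexOn ℝ s f)
    (hp : ∀ i, p i ∈ s) :
    Fintype.card ι * f ((∑ i, p i) / Fintype.card ι) = ∑ i, f (p i) ↔
      ∀ i, p i = (∑ i, p i) / Fintype.card ι := by
  have hc : (0 : ℝ) < Fintype.card ι := by exact_mod_cast Fintype.card_pos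
  have hw : ∑ _i : ι, (Fintype.card ι : ℝ)⁻¹ = 1 := by
    simp [card_univ, hc.ne']
  have := hf.map_sum_eq_iff (t := univ) (fun _ _ => by positivity) hw fun i _ => hp i
  simp only [smul_eq_mul, inv_mul_eq_div, ← sum_div, mem_univ, true_imp_iff] at this
  rw [← this, eq_div_iff hc.ne', mul_comm]

end Mean

section Quadratic

variable {R : Type*} [CommRing R] [LinearOrder R] [IsStrictOrderedRing R] {a b c : R}

lemma mul_sub_le_sq_sub_mul (hcb : c ≤ b) (hba : b ≤ a) : c * (a - b) ≤ a ^ 2 - b * a := by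
  nlinarith [mul_nonneg (sub_nonneg.2 hba) (sub_nonneg.2 (hcb.trans hba))]

lemma sq_sub_mul_eq_mul_sub_iff (hcb : c < b) (hba : b ≤ a) :
    a ^ 2 - b * a = c * (a - b) ↔ a = b := by
  have hfac : a ^ 2 - b * a - c * (a - b) = (a - b) * (a - c) := by ring
  rw [← sub_eq_zero, hfac, mul_eq_zero, sub_eq_zero, sub_eq_zero]
  exact or_iff_left (hcb.trans_le hba).ne'

end Quadratic

open Real in
theorem stmt2 (n : ℕ) (hn : 3 ≤ n)
    (θ : Fin n → ℝ) (hθ : ∀ i, θ i ∈ Set.Ioo (0:ℝ) (π / 2))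
    (hsum : ∑ i, θ i = π) (α : ℕ) (hα : 0 < α) :
    (tan (π / n)) ^ α * ((∑ i, tan (θ i)) ^ α - ((n : ℝ) * tan (π / n)) ^ α)
      ≤ (∑ i, tan (θ i)) ^ (2 * α) - ((n : ℝ) * tan (π / n)) ^ α * (∑ i, tan (θ i)) ^ α
    ∧ ((∑ i, tan (θ i)) ^ (2 * α) - ((n : ℝ) * tan (π / n)) ^ α * (∑ i, tan (θ i)) ^ α
        = (tan (π / n)) ^ α * ((∑ i, tan (θ i)) ^ α - ((n : ℝ) * tan (π / n)) ^ α)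
      ↔ ∀ i, θ i = π / n) := by
  have : Nonempty (Fin n) := ⟨⟨0, by omega⟩⟩
  have hn3 : (3 : ℝ) ≤ n := by exact_mod_cast hn
  have hθ' : ∀ i, θ i ∈ Set.Ico 0 (π / 2) := fun i => Set.Ioo_subset_Ico_self (hθ i)
  have hT : 0 < tan (π / n) :=
    tan_pos_of_pos_of_lt_pi_div_two (by positivity) (by gcongr; linarith)
  have hmean := strictConvexOn_tan.convexOn.card_mul_map_mean_le hθ'
  have hmean_eq := strictConvexOn_tan.card_mul_map_mean_eq_iff hθ'
  simp only [Fintype.card_fin, hsum] at hmean hmean_eq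
  set S := ∑ i, tan (θ i)
  set T := tan (π / n)
  have hCB : T ^ α < (n * T) ^ α := pow_lt_pow_left₀ (by nlinarith) hT.le hα.ne'
  have hBA : (n * T) ^ α ≤ S ^ α := pow_le_pow_left₀ (by positivity) hmean α
  rw [mul_comm 2, pow_mul]
  refine ⟨mul_sub_le_sq_sub_mul hCB.le hBA, ?_⟩
  rw [sq_sub_mul_eq_mul_sub_iff hCB hBA,
    pow_left_inj₀ (hmean.trans' (by positivity)) (by positivity) hα.ne', eq_comm, hmean_eq]
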